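/- arXiv:2101.02781 — 3 statements merged into one kernel-verified Lean document; each statement's English description precedes it below -/
import Mathlib

section
/- The semidirect product on pairs of square max-plus matrices defined by (M,G)·(A,H) = (M ⊕ A ⊕ H ⊕ (M ⊗ H), G ∘ H) is associative: [(M,G)·(A,H)]·(B,J) = (M,G)·[(A,H)·(B,J)]. -/
open Finset

abbrev Rmax : Type := WithBot ℝ

/-- Tropical (max-plus) matrix product. -/
noncomputable def trMul {l m n : ℕ} (A : Matrix (Fin l) (Fin m) Rmax) (B : Matrix (Fin m) (Fin n) Rmax) :
    Matrix (Fin l) (Fin n) Rmax :=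
  fun i j => univ.sup fun k => A i k + B k j

/-- Entrywise tropical sum (max) of matrices. -/
noncomputable def trSup {m n : ℕ} (A B : Matrix (Fin m) (Fin n) Rmax) : Matrix (Fin m) (Fin n) Rmax :=
  fun i j => A i j ⊔ B i j

/-- Tropical identity matrix. -/
noncomputable def trId (d : ℕ) : Matrix (Fin d) (Fin d) Rmax := fun i j => if i = j then 0 else ⊥

/-- Tropical matrix powers, `trPow A 0 = I`. -/
noncomputable def trPow {d : ℕ} (A : Matrix (Fin d) (Fin d) Rmax) : ℕ → Matrix (Fin d) (Fin d) Rmax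
  | 0 => trId d
  | n + 1 => trMul (trPow A n) A

/-- Adjoint product `A ∘ B = A ⊕ B ⊕ (A ⊗ B)`. -/
noncomputable def adj {d : ℕ} (A B : Matrix (Fin d) (Fin d) Rmax) : Matrix (Fin d) (Fin d) Rmax :=
  trSup (trSup A B) (trMul A B)

/-- Adjoint powers: `adjPow A n = A^{∘n}` for `n ≥ 1` (value at 0 is junk `A`). -/
noncomputable def adjPow {d : ℕ} (A : Matrix (Fin d) (Fin d) Rmax) : ℕ → Matrix (Fin d) (Fin d) Rmax
  | 0 => A
  | 1 => A
  | n + 2 => adj (adjPow A (n + 1)) A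

/-- Semidirect product of pairs:
`(M,G)·(A,H) = (M ⊕ A ⊕ H ⊕ (M ⊗ H), G ∘ H)`. -/
noncomputable def sd {d : ℕ} (p q : Matrix (Fin d) (Fin d) Rmax × Matrix (Fin d) (Fin d) Rmax) :
    Matrix (Fin d) (Fin d) Rmax × Matrix (Fin d) (Fin d) Rmax :=
  (trSup (trSup (trSup p.1 q.1) q.2) (trMul p.1 q.2), adj p.2 q.2)

/-- Semidirect powers: `sdPow p n = p^n` for `n ≥ 1` (value at 0 is junk `p`). -/
noncomputable def sdPow {d : ℕ} (p : Matrix (Fin d) (Fin d) Rmax × Matrix (Fin d) (Fin d) Rmax) :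
    ℕ → Matrix (Fin d) (Fin d) Rmax × Matrix (Fin d) (Fin d) Rmax
  | 0 => p
  | 1 => p
  | n + 2 => sd (sdPow p (n + 1)) p

/-- Maximum cycle mean `λ(F)`: maximum over cycles `(c 0, c 1, …, c k, c 0)` of
the average arc weight. -/
noncomputable def mcm {d : ℕ} (F : Matrix (Fin d) (Fin d) Rmax) : Rmax :=
  univ.sup fun kc : Σ k : Fin d, Fin (k.1 + 1) → Fin d =>
    (∑ i, F (kc.2 i) (kc.2 (i + 1))).map fun w => w / ((kc.1 : ℕ) + 1)

/-- Metric matrix `A⁺ = A ⊕ A^{⊗2} ⊕ ⋯ ⊕ A^{⊗d}`. -/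
noncomputable def metric {d : ℕ} (A : Matrix (Fin d) (Fin d) Rmax) : Matrix (Fin d) (Fin d) Rmax :=
  fun i j => (Finset.Icc 1 d).sup fun k => trPow A k i j

/-- Kleene star `A* = I ⊕ A ⊕ ⋯ ⊕ A^{⊗(d-1)}`. -/
noncomputable def kstar {d : ℕ} (A : Matrix (Fin d) (Fin d) Rmax) : Matrix (Fin d) (Fin d) Rmax :=
  fun i j => (Finset.range d).sup fun k => trPow A k i j

/-- `F` is irreducible: its weighted digraph is strongly connected. -/
def TrIrreducible {d : ℕ} (F : Matrix (Fin d) (Fin d) Rmax) : Prop :=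
  ∀ i j : Fin d, Relation.ReflTransGen (fun a b => F a b ≠ ⊥) i j

/-! `⊗` is associative and distributes over `⊕`, which is associative, commutative and idempotent;
hence `∘` is associative and, by idempotence, `(X ⊕ Y) ∘ J = (X ∘ J) ⊕ (Y ∘ J)`. As the first
component of `(M,G)·(A,H)` is `(M ∘ H) ⊕ A`, both sides of the identity are
`((M ∘ H ∘ J) ⊕ (A ∘ J) ⊕ B, G ∘ H ∘ J)`. -/

lemma WithBot.finsetSup_add {α ι : Type*} [LinearOrder α] [Add α] [AddRightMono α]
    (s : Finset ι) (f : ι → WithBot α) (c : WithBot α) :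
    s.sup f + c = s.sup fun k => f k + c :=
  apply_sup_eq_sup_comp_of_linearOrder (· + c) (fun _ _ h => add_le_add_left h c)
    (WithBot.bot_add c)

lemma WithBot.add_finsetSup {α ι : Type*} [LinearOrder α] [AddCommSemigroup α] [AddRightMono α]
    (s : Finset ι) (f : ι → WithBot α) (c : WithBot α) :
    c + s.sup f = s.sup fun k => c + f k := by
  simp only [add_comm c, WithBot.finsetSup_add]

section TropicalMatrix

variable {l m n o : ℕ}

instance : Std.Associative (trSup (m := m) (n := n)) :=
  ⟨fun _ _ _ => funext₂ fun _ _ => sup_assoc _ _ _⟩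

instance : Std.Commutative (trSup (m := m) (n := n)) :=
  ⟨fun _ _ => funext₂ fun _ _ => sup_comm _ _⟩

instance : Std.IdempotentOp (trSup (m := m) (n := n)) :=
  ⟨fun _ => funext₂ fun _ _ => sup_idem _⟩

lemma trMul_trSup_right (A : Matrix (Fin l) (Fin m) Rmax) (B C : Matrix (Fin m) (Fin n) Rmax) :
    trMul A (trSup B C) = trSup (trMul A B) (trMul A C) := by
  funext i j
  simp only [trMul, trSup, ← max_add_add_left]
  exact Finset.sup_sup

lemma trMul_trSup_left (A B : Matrix (Fin l) (Fin m) Rmax) (C : Matrix (Fin m) (Fin n) Rmax) :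
    trMul (trSup A B) C = trSup (trMul A C) (trMul B C) := by
  funext i j
  simp only [trMul, trSup, ← max_add_add_right]
  exact Finset.sup_sup

lemma trMul_assoc (A : Matrix (Fin l) (Fin m) Rmax) (B : Matrix (Fin m) (Fin n) Rmax)
    (C : Matrix (Fin n) (Fin o) Rmax) :
    trMul (trMul A B) C = trMul A (trMul B C) := by
  funext i j
  simp only [trMul, WithBot.finsetSup_add, WithBot.add_finsetSup, add_assoc]
  exact Finset.sup_comm _ _ _

end TropicalMatrix

section AdjointProduct

variable {d : ℕ}

lemma adj_assoc (A B C : Matrix (Fin d) (Fin d) Rmax) : adj (adj A B) C = adj A (adj B C) := by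
  simp only [adj, trMul_trSup_left, trMul_trSup_right, trMul_assoc]
  ac_rfl

lemma adj_trSup_left (A B C : Matrix (Fin d) (Fin d) Rmax) :
    adj (trSup A B) C = trSup (adj A C) (adj B C) := by
  simp only [adj, trMul_trSup_left]
  ac_rfl

lemma sd_fst (p q : Matrix (Fin d) (Fin d) Rmax × Matrix (Fin d) (Fin d) Rmax) :
    (sd p q).1 = trSup (adj p.1 q.2) q.1 := by
  simp only [sd, adj]
  ac_rfl

end AdjointProduct

theorem sd_assoc {d : ℕ} (M G A H B J : Matrix (Fin d) (Fin d) Rmax) :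
    sd (sd (M, G) (A, H)) (B, J) = sd (M, G) (sd (A, H) (B, J)) := by
  refine Prod.ext ?_ (adj_assoc G H J)
  simp only [sd_fst, adj_trSup_left, adj_assoc]
  ac_rfl
end

section
/- Let M, H be d×d max-plus matrices and let A^{(k)} denote the first component of the semidirect power (M,H)^k. If m > n ≥ 2, then A^{(m)} ≥ A^{(n)} entrywise; conversely, if A^{(m)} > A^{(n)} (entrywise ≥ and not equal), then m > n. -/
open Finset

lemma sdPow_fst_le_succ {d : ℕ} (p : Matrix (Fin d) (Fin d) Rmax × Matrix (Fin d) (Fin d) Rmax)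
    (k : ℕ) (i j : Fin d) : (sdPow p k).1 i j ≤ (sdPow p (k + 1)).1 i j := by
  cases k with
  | zero => rfl
  | succ k => exact le_sup_of_le_left (le_sup_of_le_left le_sup_left)

lemma monotone_sdPow_fst {d : ℕ} (p : Matrix (Fin d) (Fin d) Rmax × Matrix (Fin d) (Fin d) Rmax)
    (i j : Fin d) : Monotone fun k => (sdPow p k).1 i j :=
  monotone_nat_of_le_succ fun k => sdPow_fst_le_succ p k i j

theorem sdPow_fst_monotone_general {d : ℕ} (M H : Matrix (Fin d) (Fin d) Rmax) (m n : ℕ) :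
    (m > n → ∀ i j, (sdPow (M, H) n).1 i j ≤ (sdPow (M, H) m).1 i j) ∧
      (((∀ i j, (sdPow (M, H) n).1 i j ≤ (sdPow (M, H) m).1 i j) ∧
          (sdPow (M, H) m).1 ≠ (sdPow (M, H) n).1) → m > n) := by
  refine ⟨fun hnm i j => monotone_sdPow_fst _ i j hnm.le, ?_⟩
  rintro ⟨hle, hne⟩
  by_contra! hmn
  exact hne (funext₂ fun i j => le_antisymm (monotone_sdPow_fst _ i j hmn) (hle i j))

theorem sdPow_fst_monotone {d : ℕ} (M H : Matrix (Fin d) (Fin d) Rmax) (m n : ℕ)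
    (hm : 2 ≤ m) (hn : 2 ≤ n) :
    (m > n → ∀ i j, (sdPow (M, H) n).1 i j ≤ (sdPow (M, H) m).1 i j) ∧
      (((∀ i j, (sdPow (M, H) n).1 i j ≤ (sdPow (M, H) m).1 i j) ∧
          (sdPow (M, H) m).1 ≠ (sdPow (M, H) n).1) → m > n) :=
  sdPow_fst_monotone_general M H m n
end

section
/- If M, H are d×d max-plus matrices with λ(H) ≤ 0 and m ≥ d+1, then the first component A of (M,H)^m equals (M ⊕ H) ⊗ H*, where H* = I ⊕ H ⊕ ⋯ ⊕ H^{⊗(d-1)} is the Kleene star of H. -/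
open Finset

/-!
With `U n = I ⊕ H ⊕ ⋯ ⊕ H^{⊗(n-1)}` (`trPowSum H n`), the recursion
`A_{n+1} = A_n ⊕ M ⊕ H ⊕ A_n ⊗ H` for the first component of `(M,H)^n` is solved by
`A_n = M ⊗ U n ⊕ H ⊗ U (n-1)`, because `U (n+1) = U n ⊕ I ⊕ U n ⊗ H`.
When `λ(H) ≤ 0`, every power `H^{⊗k}` is bounded by `H* = U d`: an optimal walk of length
`k ≥ d` revisits a vertex within its first `d` steps, and cutting out the resulting cycle, of
weight `≤ 0`, leaves a shorter walk between the same endpoints. Hence `U n = H*` for `n ≥ d`,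
and for `m ≥ d + 1` both partial sums in `A_m` equal `H*`.
-/

section SupAdd

variable {ι M : Type*} [AddCommMonoid M] [LinearOrder M] [IsOrderedAddMonoid M]

lemma WithBot.finset_sup_add (s : Finset ι) (f : ι → WithBot M) (c : WithBot M) :
    s.sup f + c = s.sup fun x => f x + c := by
  induction s using Finset.cons_induction with
  | empty => simp
  | cons a s h ih => simp [Finset.sup_cons, ← ih, max_add_add_right]

lemma WithBot.add_finset_sup (s : Finset ι) (f : ι → WithBot M) (c : WithBot M) :
    c + s.sup f = s.sup fun x => c + f x := by
  simp_rw [add_comm c, WithBot.finset_sup_add]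

end SupAdd

lemma WithBot.nonpos_of_map_div_nonpos {x : WithBot ℝ} {c : ℝ} (hc : 0 < c)
    (h : x.map (· / c) ≤ 0) : x ≤ 0 := by
  induction x using WithBot.recBotCoe with
  | bot => exact bot_le
  | coe r =>
    rw [WithBot.map_coe] at h
    have : r / c ≤ 0 := by exact_mod_cast h
    exact_mod_cast le_of_not_gt fun hr => (div_pos hr hc).not_ge this

section MaxPlusAlgebra

variable {l m n o : ℕ}

lemma add_le_trMul (A : Matrix (Fin l) (Fin m) Rmax) (B : Matrix (Fin m) (Fin n) Rmax)
    (i : Fin l) (k : Fin m) (j : Fin n) : A i k + B k j ≤ trMul A B i j :=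
  le_sup (f := fun k => A i k + B k j) (mem_univ k)

lemma trMul_trId (A : Matrix (Fin l) (Fin m) Rmax) : trMul A (trId m) = A := by
  funext i j
  refine le_antisymm (Finset.sup_le fun k _ => ?_) ?_
  · by_cases h : k = j <;> simp [trId, h]
  · simpa [trId] using add_le_trMul A (trId m) i j j

lemma trPow_add {d : ℕ} (A : Matrix (Fin d) (Fin d) Rmax) (p q : ℕ) :
    trPow A (p + q) = trMul (trPow A p) (trPow A q) := by
  induction q with
  | zero => exact (trMul_trId _).symm
  | succ q ih => rw [← add_assoc, trPow, ih, trMul_assoc, trPow]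

end MaxPlusAlgebra

section PartialKleeneSums

variable {d : ℕ}

noncomputable def trPowSum (A : Matrix (Fin d) (Fin d) Rmax) (n : ℕ) : Matrix (Fin d) (Fin d) Rmax :=
  fun i j => (range n).sup fun t => trPow A t i j

lemma trPowSum_one (A : Matrix (Fin d) (Fin d) Rmax) : trPowSum A 1 = trId d := by
  funext i j
  simp [trPowSum, trPow]

lemma trPowSum_succ' (A : Matrix (Fin d) (Fin d) Rmax) (n : ℕ) :
    trPowSum A (n + 1) = trSup (trId d) (trMul (trPowSum A n) A) := by
  funext i j
  simp only [trPowSum, trSup, trMul, WithBot.finset_sup_add]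
  rw [Finset.sup_comm, range_add_one', sup_insert, sup_map]
  rfl

lemma trPowSum_mono (A : Matrix (Fin d) (Fin d) Rmax) {n n' : ℕ} (h : n ≤ n') (i j : Fin d) :
    trPowSum A n i j ≤ trPowSum A n' i j :=
  sup_mono (range_subset_range.2 h)

lemma trPowSum_succ (A : Matrix (Fin d) (Fin d) Rmax) (n : ℕ) :
    trPowSum A (n + 1) = trSup (trSup (trPowSum A n) (trId d)) (trMul (trPowSum A n) A) := by
  funext i j
  rw [← sup_eq_right.2 (trPowSum_mono A n.le_succ i j), trPowSum_succ']
  simp only [trSup, sup_assoc]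

lemma trMul_trPowSum_succ {l : ℕ} (B : Matrix (Fin l) (Fin d) Rmax)
    (A : Matrix (Fin d) (Fin d) Rmax) (n : ℕ) :
    trMul B (trPowSum A (n + 1)) =
      trSup (trSup (trMul B (trPowSum A n)) B) (trMul (trMul B (trPowSum A n)) A) := by
  rw [trPowSum_succ, trMul_trSup_right, trMul_trSup_right, trMul_trId, trMul_assoc]

lemma sdPow_fst_eq (M H : Matrix (Fin d) (Fin d) Rmax) (n : ℕ) :
    (sdPow (M, H) (n + 1)).1 = trSup (trMul M (trPowSum H (n + 1))) (trMul H (trPowSum H n)) := by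
  induction n with
  | zero =>
    rw [trPowSum_one, trMul_trId]
    funext i j
    simp [sdPow, trSup, trMul, trPowSum]
  | succ n ih =>
    change trSup (trSup (trSup (sdPow (M, H) (n + 1)).1 M) H) (trMul (sdPow (M, H) (n + 1)).1 H) = _
    rw [ih, trMul_trSup_left, trMul_trPowSum_succ M H (n + 1), trMul_trPowSum_succ H H n]
    funext i j
    simp only [trSup]
    ac_rfl

end PartialKleeneSums

section Walks

variable {d : ℕ} (A : Matrix (Fin d) (Fin d) Rmax)

noncomputable def pathWeight (k : ℕ) (v : ℕ → Fin d) : Rmax :=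
  ∑ t ∈ range k, A (v t) (v (t + 1))

lemma pathWeight_succ (k : ℕ) (v : ℕ → Fin d) :
    pathWeight A (k + 1) v = pathWeight A k v + A (v k) (v (k + 1)) :=
  sum_range_succ _ _

lemma pathWeight_add (p q : ℕ) (v : ℕ → Fin d) :
    pathWeight A (p + q) v = pathWeight A p v + pathWeight A q fun t => v (p + t) := by
  simp only [pathWeight, sum_range_add, add_assoc]

lemma pathWeight_congr {k : ℕ} {v w : ℕ → Fin d} (h : ∀ t ≤ k, v t = w t) :
    pathWeight A k v = pathWeight A k w :=
  sum_congr rfl fun t ht => by rw [h t (mem_range.1 ht).le, h (t + 1) (mem_range.1 ht)]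

lemma pathWeight_le_trPow (k : ℕ) (v : ℕ → Fin d) : pathWeight A k v ≤ trPow A k (v 0) (v k) := by
  induction k with
  | zero => simp [pathWeight, trPow, trId]
  | succ k ih =>
    rw [pathWeight_succ]
    exact (add_le_add_left ih _).trans (add_le_trMul _ _ _ _ _)

lemma exists_pathWeight_eq_trPow (k : ℕ) {i j : Fin d} (h : trPow A k i j ≠ ⊥) :
    ∃ v : ℕ → Fin d, v 0 = i ∧ v k = j ∧ pathWeight A k v = trPow A k i j := by
  induction k generalizing j with
  | zero =>
    obtain rfl : i = j := by_contra fun hij => h (if_neg hij)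
    exact ⟨fun _ => i, rfl, rfl, by simp [pathWeight, trPow, trId]⟩
  | succ k ih =>
    obtain ⟨l, -, hl⟩ := exists_mem_eq_sup univ ⟨j, mem_univ j⟩ fun l => trPow A k i l + A l j
    change trPow A (k + 1) i j = trPow A k i l + A l j at hl
    obtain ⟨v, hv0, hvk, hv⟩ := ih (j := l) fun h' => h (by rw [hl, h', WithBot.bot_add])
    refine ⟨Function.update v (k + 1) j, by simpa using hv0, by simp, ?_⟩
    rw [pathWeight_succ, hl, Function.update_self, Function.update_of_ne (by omega), hvk, ← hv,
      pathWeight_congr A (w := v) fun t ht => Function.update_of_ne (by omega : t ≠ k + 1) _ _]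

lemma pathWeight_nonpos_of_cycle (hA : mcm A ≤ 0) {n : ℕ} (hn : n < d) {v : ℕ → Fin d}
    (hv : v (n + 1) = v 0) : pathWeight A (n + 1) v ≤ 0 := by
  have hsum : ∑ i : Fin (n + 1), A (v i) (v ↑(i + 1)) = pathWeight A (n + 1) v := by
    rw [pathWeight, ← Fin.sum_univ_eq_sum_range]
    refine sum_congr rfl fun i _ => ?_
    rw [Fin.val_add_one]
    split_ifs with h
    · simp [h, hv]
    · rfl
  have hmean := (le_sup (f := fun kc : Σ k : Fin d, Fin (k.1 + 1) → Fin d =>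
    (∑ i, A (kc.2 i) (kc.2 (i + 1))).map fun w : ℝ => w / ((kc.1 : ℕ) + 1))
    (mem_univ ⟨⟨n, hn⟩, fun t => v t⟩)).trans hA
  rw [hsum] at hmean
  exact WithBot.nonpos_of_map_div_nonpos (by positivity) hmean

end Walks

lemma exists_lt_le_apply_eq {d : ℕ} (v : ℕ → Fin d) : ∃ a b, a < b ∧ b ≤ d ∧ v a = v b := by
  obtain ⟨x, hx, y, hy, hxy, hv⟩ := exists_ne_map_eq_of_card_lt_of_maps_to
    (s := range (d + 1)) (t := univ) (by simp) (f := v) fun _ _ => mem_coe.2 (mem_univ _)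
  rw [mem_range] at hx hy
  rcases hxy.lt_or_gt with h | h
  · exact ⟨x, y, h, by omega, hv⟩
  · exact ⟨y, x, h, by omega, hv.symm⟩

section CycleMeanNonpos

variable {d : ℕ} {A : Matrix (Fin d) (Fin d) Rmax}

theorem trPow_le_kstar (hA : mcm A ≤ 0) (k : ℕ) (i j : Fin d) : trPow A k i j ≤ kstar A i j := by
  induction k using Nat.strong_induction_on generalizing i j with
  | _ k ih =>
  rcases lt_or_ge k d with hk | hk
  · exact le_sup (f := fun t => trPow A t i j) (mem_range.2 hk)
  by_cases hbot : trPow A k i j = ⊥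
  · simp [hbot]
  obtain ⟨v, rfl, rfl, hv⟩ := exists_pathWeight_eq_trPow A k hbot
  obtain ⟨a, b, hab, hbd, hvab⟩ := exists_lt_le_apply_eq v
  obtain ⟨c, rfl⟩ : ∃ c, b = a + (c + 1) := ⟨b - a - 1, by omega⟩
  obtain ⟨r, rfl⟩ : ∃ r, k = a + (c + 1) + r := ⟨k - (a + (c + 1)), by omega⟩
  have hcycle : pathWeight A (c + 1) (fun t => v (a + t)) ≤ 0 :=
    pathWeight_nonpos_of_cycle A hA (by omega) (by simpa using hvab.symm)
  calc trPow A (a + (c + 1) + r) (v 0) (v (a + (c + 1) + r))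
      = pathWeight A a v + pathWeight A (c + 1) (fun t => v (a + t))
          + pathWeight A r (fun t => v (a + (c + 1) + t)) := by
        rw [← hv, pathWeight_add, pathWeight_add]
    _ ≤ pathWeight A a v + pathWeight A r (fun t => v (a + (c + 1) + t)) := by
        grw [hcycle, add_zero]
    _ ≤ trPow A a (v 0) (v a) + trPow A r (v a) (v (a + (c + 1) + r)) := by
        refine add_le_add (pathWeight_le_trPow A a v) ?_
        simpa [← hvab] using pathWeight_le_trPow A r fun t => v (a + (c + 1) + t)
    _ ≤ trPow A (a + r) (v 0) (v (a + (c + 1) + r)) := by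
        rw [trPow_add]
        exact add_le_trMul _ _ _ _ _
    _ ≤ kstar A _ _ := ih _ (by omega) _ _

lemma trPowSum_eq_kstar (hA : mcm A ≤ 0) {n : ℕ} (hn : d ≤ n) : trPowSum A n = kstar A := by
  funext i j
  exact le_antisymm (Finset.sup_le fun t _ => trPow_le_kstar hA t i j) (trPowSum_mono A hn i j)

end CycleMeanNonpos

theorem sdPow_fst_of_mcm_nonpos {d : ℕ} (M H : Matrix (Fin d) (Fin d) Rmax)
    (hH : mcm H ≤ 0) (m : ℕ) (hm : d + 1 ≤ m) :
    (sdPow (M, H) m).1 = trMul (trSup M H) (kstar H) := by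
  obtain ⟨n, rfl⟩ : ∃ n, m = n + 1 := ⟨m - 1, by omega⟩
  rw [sdPow_fst_eq, trPowSum_eq_kstar hH (by omega), trPowSum_eq_kstar hH (by omega),
    trMul_trSup_left]
end
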